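/- Assume the graph on 𝒯 with edge set {(K,L) : a(K,L) > 0} is connected. Let u^{n−1}_i : 𝒯 → ℝ (1 ≤ i ≤ I) satisfy u^{n−1}_i(K) ≥ 0 and Σ_{i=1}^I u^{n−1}_i(K) ≤ 1 for all K, and Σ_{K} m_K·u^{n−1}_i(K) > 0 for every 0 ≤ i ≤ I, where u^{n−1}_0 := 1 − Σ_{i=1}^I u^{n−1}_i. Let φ : 𝒯 → ℝ and u^n_i : 𝒯 → ℝ (1 ≤ i ≤ I) satisfy, for all 1 ≤ i ≤ I and all K ∈ 𝒯, m_K·(u^n_i(K) − u^{n−1}_i(K)) + τ·Σ_{L} a(K,L)·D_i·((u^n_i(K))⁺·(u^n_0(L))⁺·𝔅(z_i(φ(L)−φ(K))) − (u^n_i(L))⁺·(u^n_0(K))⁺·𝔅(z_i(φ(K)−φ(L)))) = 0, where u^n_0 := 1 − Σ_{i=1}^I u^n_i and x⁺ = max(x,0). Then u^n_i(K) > 0 for every 0 ≤ i ≤ I and every K ∈ 𝒯. -/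

import Mathlib

/-!
Both each species `u i` and the solvent `u₀ = 1 - ∑ i, u i` obey a conservative scheme
`m K * (w K - w' K) + τ * ∑ L, F K L = 0` whose flux has the form
`F K L = max (w K) 0 * α K L - max (w L) 0 * β K L` with `β ≥ 0`; for the solvent this follows
by summing the species equations. A negative value at `K` would make the
flux nonpositive and hence `w K ≥ w' K ≥ 0`, so `w ≥ 0`. If `w K = 0`, the same equation forces
every inflow `w L * β K L` to vanish, so the zero set of `w` is closed along edges where `β > 0`.
For the solvent, `u₀ K = 0` means some species is present in `K`, which makes `β > 0` on every
edge; for a species, `β > 0` on edges once `u₀ > 0`. By connectivity a zero would spread to all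
cells, contradicting the positive total mass, which the antisymmetric fluxes conserve.
-/

/-- The Bernoulli function: `𝔅(y) = y / (exp y - 1)` for `y ≠ 0`, and `𝔅(0) = 1`. -/
noncomputable def Bern (y : ℝ) : ℝ := if y = 0 then 1 else y / (Real.exp y - 1)

open Finset

theorem Bern_pos (y : ℝ) : 0 < Bern y := by
  unfold Bern
  split_ifs with hy
  · exact one_pos
  · rcases lt_or_gt_of_ne hy with hneg | hpos
    · exact div_pos_of_neg_of_neg hneg (sub_neg.2 (Real.exp_lt_one_iff.2 hneg))
    · exact div_pos hpos (sub_pos.2 (Real.one_lt_exp_iff.2 hpos))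

theorem Relation.ReflTransGen.of_closed {α : Type*} {r : α → α → Prop} {P : α → Prop}
    (hP : ∀ a b, P a → r a b → P b) {a b : α} (hab : Relation.ReflTransGen r a b) (ha : P a) :
    P b := by
  induction hab with
  | refl => exact ha
  | tail _ hbc ih => exact hP _ _ ih hbc

section ConservativeScheme

variable {T : Type*} [Fintype T] {m : T → ℝ} {τ : ℝ} {u u' : T → ℝ} {F α β : T → T → ℝ}

theorem sum_sum_eq_zero_of_antisymm (hF : ∀ K L, F L K = -F K L) : ∑ K, ∑ L, F K L = 0 := by
  have h : ∑ K, ∑ L, F K L = -∑ K, ∑ L, F K L := by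
    conv_lhs => rw [sum_comm]
    rw [← sum_neg_distrib]
    exact sum_congr rfl fun K _ => by
      rw [← sum_neg_distrib]
      exact sum_congr rfl fun L _ => hF K L
  linarith

theorem sum_mul_eq_of_scheme (hF : ∀ K L, F L K = -F K L)
    (h : ∀ K, m K * (u K - u' K) + τ * ∑ L, F K L = 0) :
    ∑ K, m K * u K = ∑ K, m K * u' K := by
  have hsum : ∑ K, (m K * (u K - u' K) + τ * ∑ L, F K L) = 0 := sum_eq_zero fun K _ => h K
  rw [sum_add_distrib, ← mul_sum, sum_sum_eq_zero_of_antisymm hF, mul_zero,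
    add_zero] at hsum
  simp only [mul_sub, sum_sub_distrib] at hsum
  linarith

variable {K : T}

theorem nonneg_of_scheme (hm : 0 < m K) (hτ : 0 ≤ τ) (hu' : 0 ≤ u' K) (hβ : ∀ L, 0 ≤ β K L)
    (hF : ∀ L, F K L = max (u K) 0 * α K L - max (u L) 0 * β K L)
    (h : m K * (u K - u' K) + τ * ∑ L, F K L = 0) : 0 ≤ u K := by
  by_contra! hneg
  have hflux : ∑ L, F K L ≤ 0 := sum_nonpos fun L _ => by
    rw [hF, max_eq_right hneg.le, zero_mul, zero_sub, neg_nonpos]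
    exact mul_nonneg (le_max_right _ _) (hβ L)
  nlinarith [mul_nonpos_of_nonneg_of_nonpos hτ hflux]

theorem eq_zero_of_scheme_of_eq_zero (hm : 0 < m K) (hτ : 0 < τ) (hu' : 0 ≤ u' K)
    (hβ : ∀ L, 0 ≤ β K L) (hu : ∀ L, 0 ≤ u L)
    (hF : ∀ L, F K L = max (u K) 0 * α K L - max (u L) 0 * β K L)
    (h : m K * (u K - u' K) + τ * ∑ L, F K L = 0) (hK : u K = 0) {L : T} (hKL : 0 < β K L) :
    u L = 0 := by
  have hinflow : ∀ L, 0 ≤ u L * β K L := fun L => mul_nonneg (hu L) (hβ L)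
  have hsum : ∑ L, u L * β K L = 0 := by
    simp only [hF, hK, max_self, zero_mul, zero_sub, sum_neg_distrib,
      max_eq_left (hu _)] at h
    nlinarith [sum_nonneg fun L (_ : L ∈ univ) => hinflow L]
  have hL := (sum_eq_zero_iff_of_nonneg fun L _ => hinflow L).1 hsum L (mem_univ L)
  exact (mul_eq_zero.1 hL).resolve_right hKL.ne'

theorem pos_of_scheme {r : T → T → Prop} (hm : ∀ K, 0 < m K) (hτ : 0 < τ)
    (hu' : ∀ K, 0 ≤ u' K) (hβ : ∀ K L, 0 ≤ β K L)
    (hF : ∀ K L, F K L = max (u K) 0 * α K L - max (u L) 0 * β K L)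
    (h : ∀ K, m K * (u K - u' K) + τ * ∑ L, F K L = 0)
    (hconn : ∀ K L, Relation.ReflTransGen r K L) (hedge : ∀ K L, u K = 0 → r K L → 0 < β K L)
    (hmass : 0 < ∑ K, m K * u K) (K : T) : 0 < u K := by
  have hu : ∀ K, 0 ≤ u K := fun K =>
    nonneg_of_scheme (hm K) hτ.le (hu' K) (hβ K) (hF K) (h K)
  refine (hu K).lt_of_ne' fun hK => hmass.ne' (sum_eq_zero fun L _ => ?_)
  have hzero : ∀ K L, u K = 0 → r K L → u L = 0 := fun K L hK hKL =>
    eq_zero_of_scheme_of_eq_zero (hm K) hτ (hu' K) (hβ K) hu (hF K) (h K) hK (hedge K L hK hKL)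
  rw [(hconn K L).of_closed (P := fun K => u K = 0) hzero hK, mul_zero]

end ConservativeScheme

theorem mul_mul_max_mul_Bern_nonneg {a d : ℝ} (ha : 0 ≤ a) (hd : 0 ≤ d) (x y : ℝ) :
    0 ≤ a * d * max x 0 * Bern y :=
  mul_nonneg (mul_nonneg (mul_nonneg ha hd) (le_max_right x 0)) (Bern_pos y).le

theorem mul_mul_max_mul_Bern_pos {a d x : ℝ} (ha : 0 < a) (hd : 0 < d) (hx : 0 < x) (y : ℝ) :
    0 < a * d * max x 0 * Bern y :=
  mul_pos (mul_pos (mul_pos ha hd) (lt_max_of_lt_left hx)) (Bern_pos y)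

section Species

variable {ι T : Type*} [Fintype ι]

def solventFraction (u : ι → T → ℝ) (K : T) : ℝ := 1 - ∑ i, u i K

theorem exists_pos_of_solventFraction_eq_zero {u : ι → T → ℝ} {K : T}
    (h : solventFraction u K = 0) : ∃ i, 0 < u i K := by
  by_contra! hle
  have := sum_nonpos fun i (_ : i ∈ univ) => hle i
  unfold solventFraction at h
  linarith

theorem solventFraction_scheme [Fintype T] {m : T → ℝ} {τ : ℝ} {u u' : ι → T → ℝ}
    {F : ι → T → T → ℝ}
    (h : ∀ i K, m K * (u i K - u' i K) + τ * ∑ L, F i K L = 0) (K : T) :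
    m K * (solventFraction u K - solventFraction u' K) + τ * ∑ L, -∑ i, F i K L = 0 := by
  have hsum : ∑ i, (m K * (u i K - u' i K) + τ * ∑ L, F i K L) = 0 :=
    sum_eq_zero fun i _ => h i K
  rw [sum_add_distrib, ← mul_sum, ← mul_sum, sum_comm] at hsum
  simp only [solventFraction, sum_neg_distrib, sum_sub_distrib] at hsum ⊢
  linarith

noncomputable def speciesFlux (a : T → T → ℝ) (D z : ι → ℝ) (φ : T → ℝ) (u : ι → T → ℝ)
    (i : ι) (K L : T) : ℝ :=
  a K L * D i * (max (u i K) 0 * max (solventFraction u L) 0 * Bern (z i * (φ L - φ K)) -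
    max (u i L) 0 * max (solventFraction u K) 0 * Bern (z i * (φ K - φ L)))

variable (a : T → T → ℝ) (D z : ι → ℝ) (φ : T → ℝ) (u : ι → T → ℝ)

theorem speciesFlux_antisymm (hsym : ∀ K L, a K L = a L K) (i : ι) (K L : T) :
    speciesFlux a D z φ u i L K = -speciesFlux a D z φ u i K L := by
  unfold speciesFlux
  rw [hsym]
  ring

theorem speciesFlux_eq (i : ι) (K L : T) :
    speciesFlux a D z φ u i K L =
      max (u i K) 0 * (a K L * D i * max (solventFraction u L) 0 * Bern (z i * (φ L - φ K))) -
        max (u i L) 0 *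
          (a K L * D i * max (solventFraction u K) 0 * Bern (z i * (φ K - φ L))) := by
  unfold speciesFlux
  ring

theorem neg_sum_speciesFlux_eq (K L : T) :
    -∑ i, speciesFlux a D z φ u i K L =
      max (solventFraction u K) 0 * ∑ i, a K L * D i * max (u i L) 0 * Bern (z i * (φ K - φ L)) -
        max (solventFraction u L) 0 *
          ∑ i, a K L * D i * max (u i K) 0 * Bern (z i * (φ L - φ K)) := by
  rw [mul_sum, mul_sum, ← sum_sub_distrib, ← sum_neg_distrib]
  refine sum_congr rfl fun i _ => ?_
  unfold speciesFlux
  ring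

theorem neg_sum_speciesFlux_antisymm (hsym : ∀ K L, a K L = a L K) (K L : T) :
    -∑ i, speciesFlux a D z φ u i L K = -(-∑ i, speciesFlux a D z φ u i K L) := by
  rw [neg_neg, ← sum_neg_distrib]
  exact sum_congr rfl fun i _ => by rw [speciesFlux_antisymm a D z φ u hsym, neg_neg]

end Species

theorem discrete_positivity_general
    (T : Type*) [Fintype T]
    (m : T → ℝ) (hm : ∀ K, 0 < m K)
    (a : T → T → ℝ) (hsym : ∀ K L, a K L = a L K)
    (hnn : ∀ K L, 0 ≤ a K L)
    (hconn : ∀ K L : T, Relation.ReflTransGen (fun K L => 0 < a K L) K L)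
    (I : ℕ) (D z : Fin I → ℝ) (hD : ∀ i, 0 < D i)
    (τ : ℝ) (hτ : 0 < τ)
    (up : Fin I → T → ℝ)
    (hup_nn : ∀ i K, 0 ≤ up i K) (hup_sum : ∀ K, ∑ i, up i K ≤ 1)
    (hup_mass : ∀ i, 0 < ∑ K, m K * up i K)
    (hup_mass0 : 0 < ∑ K, m K * (1 - ∑ i, up i K))
    (un : Fin I → T → ℝ) (φ : T → ℝ)
    (hscheme : ∀ i K, m K * (un i K - up i K) +
      τ * ∑ L, a K L * D i *
        (max (un i K) 0 * max (1 - ∑ j, un j L) 0 * Bern (z i * (φ L - φ K)) -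
          max (un i L) 0 * max (1 - ∑ j, un j K) 0 * Bern (z i * (φ K - φ L))) = 0) :
    (∀ i K, 0 < un i K) ∧ (∀ K, 0 < 1 - ∑ i, un i K) := by
  have hspecies : ∀ i K, m K * (un i K - up i K) + τ * ∑ L, speciesFlux a D z φ un i K L = 0 :=
    hscheme
  have hsolvent := solventFraction_scheme hspecies
  have hsolvent_mass : 0 < ∑ K, m K * solventFraction un K := by
    rwa [sum_mul_eq_of_scheme (neg_sum_speciesFlux_antisymm a D z φ un hsym) hsolvent]
  -- a cell emptied of solvent holds some species, which then flows out along every edge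
  have hsolvent_edge : ∀ K L, solventFraction un K = 0 → 0 < a K L →
      0 < ∑ i, a K L * D i * max (un i K) 0 * Bern (z i * (φ L - φ K)) := fun K L hK hKL => by
    obtain ⟨i, hi⟩ := exists_pos_of_solventFraction_eq_zero hK
    exact sum_pos' (fun j _ => mul_mul_max_mul_Bern_nonneg (hnn K L) (hD j).le _ _)
      ⟨i, mem_univ i, mul_mul_max_mul_Bern_pos hKL (hD i) hi _⟩
  have hsolvent_pos : ∀ K, 0 < solventFraction un K :=
    pos_of_scheme hm hτ (fun K => sub_nonneg.2 (hup_sum K))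
      (fun K L => sum_nonneg fun i _ => mul_mul_max_mul_Bern_nonneg (hnn K L) (hD i).le _ _)
      (neg_sum_speciesFlux_eq a D z φ un) hsolvent hconn hsolvent_edge hsolvent_mass
  refine ⟨fun i => pos_of_scheme hm hτ (hup_nn i)
    (fun K L => mul_mul_max_mul_Bern_nonneg (hnn K L) (hD i).le _ _)
    (speciesFlux_eq a D z φ un i) (hspecies i) hconn
    (fun K L _ hKL => mul_mul_max_mul_Bern_pos hKL (hD i) (hsolvent_pos K) _) ?_, hsolvent_pos⟩
  rw [sum_mul_eq_of_scheme (speciesFlux_antisymm a D z φ un hsym i) (hspecies i)]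
  exact hup_mass i

/-- Positivity of the volume fractions for the modified scheme with positive
parts in the fluxes, assuming the connectivity of the mesh graph, admissibility
of the previous iterate, and positivity of all the total masses. -/
theorem discrete_positivity
    (T : Type*) [Fintype T] [Nonempty T]
    (m : T → ℝ) (hm : ∀ K, 0 < m K)
    (a : T → T → ℝ) (hsym : ∀ K L, a K L = a L K)
    (hnn : ∀ K L, 0 ≤ a K L) (hdiag : ∀ K, a K K = 0)
    (hconn : ∀ K L : T, Relation.ReflTransGen (fun K L => 0 < a K L) K L)
    (I : ℕ) (hI : 1 ≤ I) (D z : Fin I → ℝ) (hD : ∀ i, 0 < D i)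
    (τ : ℝ) (hτ : 0 < τ)
    (up : Fin I → T → ℝ)
    (hup_nn : ∀ i K, 0 ≤ up i K) (hup_sum : ∀ K, ∑ i, up i K ≤ 1)
    (hup_mass : ∀ i, 0 < ∑ K, m K * up i K)
    (hup_mass0 : 0 < ∑ K, m K * (1 - ∑ i, up i K))
    (un : Fin I → T → ℝ) (φ : T → ℝ)
    (hscheme : ∀ i K, m K * (un i K - up i K) +
      τ * ∑ L, a K L * D i *
        (max (un i K) 0 * max (1 - ∑ j, un j L) 0 * Bern (z i * (φ L - φ K)) -
          max (un i L) 0 * max (1 - ∑ j, un j K) 0 * Bern (z i * (φ K - φ L))) = 0) :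
    (∀ i K, 0 < un i K) ∧ (∀ K, 0 < 1 - ∑ i, un i K) :=
  discrete_positivity_general T m hm a hsym hnn hconn I D z hD τ hτ up hup_nn hup_sum hup_mass
    hup_mass0 un φ hscheme
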